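/- Let φ be an Orlicz function taking only finite values, satisfying the Δ₂-condition at zero, and such that ∑_{n=n₁}^∞ φ(1/n) < ∞ for some n₁ ∈ ℕ. Then ces_φ is uniformly monotone: for every ε > 0 there exists δ > 0 such that for all x, y ∈ ces_φ with x(i) ≥ 0 and y(i) ≥ 0 for all i, ‖x‖_φ = 1 and ‖y‖_φ ≥ ε, one has ‖x + y‖_φ ≥ 1 + δ. -/

import Mathlib

open scoped ENNReal
open Filter

/-- An Orlicz function: `φ : ℝ → [0,∞]` even, convex, left continuous on `ℝ₊`,
continuous at zero, with `φ 0 = 0` and `φ u → ∞` as `u → ∞`. -/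
structure OrliczFunction where
  toFun : ℝ → ℝ≥0∞
  even' : ∀ u : ℝ, toFun (-u) = toFun u
  convex' : ∀ u v t : ℝ, 0 ≤ t → t ≤ 1 →
    toFun (t * u + (1 - t) * v) ≤ ENNReal.ofReal t * toFun u + ENNReal.ofReal (1 - t) * toFun v
  map_zero' : toFun 0 = 0
  leftContinuous' : ∀ t : ℝ, 0 < t → Tendsto toFun (nhdsWithin t (Set.Iio t)) (nhds (toFun t))
  continuousAtZero' : Tendsto toFun (nhds 0) (nhds 0)
  tendsto_top' : Tendsto toFun atTop (nhds ⊤)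

/-- The Cesàro mean `σx(n) = (1/n) ∑_{j=1}^n |x j|` (with `0`-based indexing). -/
noncomputable def cesaroMean (x : ℕ → ℝ) (n : ℕ) : ℝ :=
  (∑ j ∈ Finset.range (n + 1), |x j|) / (n + 1)

/-- The modular `ρ_φ(x) = ∑_i φ(σx(i))`. -/
noncomputable def rho (φ : OrliczFunction) (x : ℕ → ℝ) : ℝ≥0∞ :=
  ∑' n : ℕ, φ.toFun (cesaroMean x n)

/-- The Cesàro–Orlicz sequence space `ces_φ`. -/
def cesOrlicz (φ : OrliczFunction) : Set (ℕ → ℝ) :=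
  {x | ∃ lam : ℝ, 0 < lam ∧ rho φ (fun i => lam * x i) < ⊤}

/-- The Luxemburg norm `‖x‖_φ = inf {λ > 0 : ρ_φ(x/λ) ≤ 1}`. -/
noncomputable def luxNorm (φ : OrliczFunction) (x : ℕ → ℝ) : ℝ :=
  sInf {lam : ℝ | 0 < lam ∧ rho φ (fun i => x i / lam) ≤ 1}

/-- The subspace `A_φ` of `ces_φ`. -/
def Aphi (φ : OrliczFunction) : Set (ℕ → ℝ) :=
  {x | x ∈ cesOrlicz φ ∧ ∀ k : ℝ, 0 < k → ∃ nk : ℕ,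
    ∑' n : ℕ, φ.toFun ((k / ((nk + n + 1 : ℕ) : ℝ)) * ∑ i ∈ Finset.range (nk + n + 1), |x i|) < ⊤}

/-- `∃ n₁, ∑_{n=n₁}^∞ φ(1/n) < ∞`. -/
def TailFinite (φ : OrliczFunction) : Prop :=
  ∃ n₁ : ℕ, ∑' n : ℕ, φ.toFun (((n₁ + n + 1 : ℕ) : ℝ)⁻¹) < ⊤

/-- The `Δ₂`-condition at zero. -/
def Delta2Zero (φ : OrliczFunction) : Prop :=
  ∃ K : ℝ, 0 < K ∧ ∃ a : ℝ, 0 < a ∧ 0 < φ.toFun a ∧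
    ∀ u : ℝ, 0 ≤ u → u ≤ a → φ.toFun (2 * u) ≤ ENNReal.ofReal K * φ.toFun u

/-- `φ` takes only finite values. -/
def FiniteValued (φ : OrliczFunction) : Prop := ∀ u : ℝ, φ.toFun u ≠ ⊤

/-!
Uniform monotonicity is reduced to estimates for the modular `ρ`. Left continuity of `φ`
gives `ρ x ≤ 1` when `‖x‖ = 1`, so every Cesàro mean of `x` stays below a point `b` with
`φ b > 1`. Since `φ` is finite, the `Δ₂`-condition extends to `[0, b]` with some constant `K`,
and convexity then gives `ρ ((1 + δ) w) ≤ (1 - δ + δ K) ρ w` whenever `ρ w ≤ 1`. This forces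
`ρ x = 1` when `‖x‖ = 1`, and `‖z‖ ≥ 1 + δ` as soon as `ρ z > 1 - δ + δ K`. Iterating `Δ₂` near
zero shows that `‖y‖ ≥ ε` forces `ρ y ≥ η(ε) > 0`. Finally `φ` is superadditive on `[0, ∞)` and
Cesàro means are additive on nonnegative sequences, so `ρ (x + y) ≥ ρ x + ρ y ≥ 1 + η`.
-/

open Topology

namespace OrliczFunction

variable (φ : OrliczFunction)

theorem map_mul_le {t : ℝ} (ht0 : 0 ≤ t) (ht1 : t ≤ 1) (u : ℝ) :
    φ.toFun (t * u) ≤ ENNReal.ofReal t * φ.toFun u := by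
  simpa [φ.map_zero'] using φ.convex' u 0 t ht0 ht1

theorem monotoneOn : MonotoneOn φ.toFun (Set.Ici 0) := by
  intro u hu v hv huv
  rcases (show (0 : ℝ) ≤ v from hv).eq_or_lt with rfl | hv0
  · rw [le_antisymm huv hu]
  calc φ.toFun u = φ.toFun (u / v * v) := by rw [div_mul_cancel₀ u hv0.ne']
    _ ≤ ENNReal.ofReal (u / v) * φ.toFun v :=
      φ.map_mul_le (div_nonneg hu hv0.le) (div_le_one_of_le₀ huv hv0.le) v
    _ ≤ φ.toFun v :=
      mul_le_of_le_one_left' (ENNReal.ofReal_le_one.mpr (div_le_one_of_le₀ huv hv0.le))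

theorem add_le_map_add {u v : ℝ} (hu : 0 ≤ u) (hv : 0 ≤ v) :
    φ.toFun u + φ.toFun v ≤ φ.toFun (u + v) := by
  rcases (add_nonneg hu hv).eq_or_lt with hs | hs
  · obtain ⟨rfl, rfl⟩ : u = 0 ∧ v = 0 := ⟨by linarith, by linarith⟩
    simp [φ.map_zero']
  have hu1 : u / (u + v) ≤ 1 := div_le_one_of_le₀ (by linarith) hs.le
  have hv1 : v / (u + v) ≤ 1 := div_le_one_of_le₀ (by linarith) hs.le
  calc φ.toFun u + φ.toFun v
      = φ.toFun (u / (u + v) * (u + v)) + φ.toFun (v / (u + v) * (u + v)) := by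
        rw [div_mul_cancel₀ u hs.ne', div_mul_cancel₀ v hs.ne']
    _ ≤ ENNReal.ofReal (u / (u + v)) * φ.toFun (u + v)
        + ENNReal.ofReal (v / (u + v)) * φ.toFun (u + v) :=
      add_le_add (φ.map_mul_le (by positivity) hu1 _) (φ.map_mul_le (by positivity) hv1 _)
    _ = φ.toFun (u + v) := by
      rw [← add_mul, ← ENNReal.ofReal_add (by positivity) (by positivity), ← add_div,
        div_self hs.ne', ENNReal.ofReal_one, one_mul]

theorem map_one_add_mul_le {δ K u : ℝ} (hδ0 : 0 ≤ δ) (hδ1 : δ ≤ 1) (hK0 : 0 ≤ K)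
    (h2 : φ.toFun (2 * u) ≤ ENNReal.ofReal K * φ.toFun u) :
    φ.toFun ((1 + δ) * u) ≤ ENNReal.ofReal (1 - δ + δ * K) * φ.toFun u := by
  have hconv := φ.convex' (2 * u) u δ hδ0 hδ1
  rw [show δ * (2 * u) + (1 - δ) * u = (1 + δ) * u by ring] at hconv
  calc φ.toFun ((1 + δ) * u)
      ≤ ENNReal.ofReal δ * (ENNReal.ofReal K * φ.toFun u)
        + ENNReal.ofReal (1 - δ) * φ.toFun u :=
        hconv.trans (by gcongr)
    _ = ENNReal.ofReal (1 - δ + δ * K) * φ.toFun u := by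
      rw [← mul_assoc, ← ENNReal.ofReal_mul hδ0, ← add_mul,
        ← ENNReal.ofReal_add (by positivity) (by linarith), add_comm (δ * K)]

theorem map_add_le_half (u v : ℝ) :
    φ.toFun (u + v) ≤ ENNReal.ofReal (1 / 2) * φ.toFun (2 * u)
      + ENNReal.ofReal (1 / 2) * φ.toFun (2 * v) := by
  have h := φ.convex' (2 * u) (2 * v) (1 / 2) (by norm_num) (by norm_num)
  rwa [show (1 : ℝ) / 2 * (2 * u) + (1 - 1 / 2) * (2 * v) = u + v by ring,
    show (1 : ℝ) - 1 / 2 = 1 / 2 by norm_num] at h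

theorem exists_one_lt_map : ∃ b : ℝ, 0 ≤ b ∧ 1 < φ.toFun b := by
  obtain ⟨b, hb⟩ := eventually_atTop.mp
    (φ.tendsto_top'.eventually (lt_mem_nhds ENNReal.one_lt_top))
  exact ⟨max b 0, le_max_right _ _, hb _ (le_max_left _ _)⟩

end OrliczFunction

def Delta2Below (φ : OrliczFunction) (b K : ℝ) : Prop :=
  ∀ u : ℝ, 0 ≤ u → u ≤ b → φ.toFun (2 * u) ≤ ENNReal.ofReal K * φ.toFun u

theorem Delta2Below.map_two_pow_mul_le {φ : OrliczFunction} {b K : ℝ} (h : Delta2Below φ b K)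
    (hK0 : 0 ≤ K) (m : ℕ) {u : ℝ} (hu : 0 ≤ u) (hmu : 2 ^ m * u ≤ b) :
    φ.toFun (2 ^ m * u) ≤ ENNReal.ofReal (K ^ m) * φ.toFun u := by
  induction m generalizing u with
  | zero => simp
  | succ m ih =>
    have hub : u ≤ b := le_trans (le_mul_of_one_le_left hu (one_le_pow₀ one_le_two)) hmu
    calc φ.toFun (2 ^ (m + 1) * u) = φ.toFun (2 ^ m * (2 * u)) := by ring_nf
      _ ≤ ENNReal.ofReal (K ^ m) * φ.toFun (2 * u) :=
        ih (by positivity) (by rwa [← mul_assoc, ← pow_succ])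
      _ ≤ ENNReal.ofReal (K ^ m) * (ENNReal.ofReal K * φ.toFun u) := by gcongr; exact h u hu hub
      _ = ENNReal.ofReal (K ^ (m + 1)) * φ.toFun u := by
        rw [← mul_assoc, ← ENNReal.ofReal_mul (by positivity), pow_succ]

namespace Delta2Zero

variable {φ : OrliczFunction}

theorem map_pos (h : Delta2Zero φ) {u : ℝ} (hu : 0 < u) : 0 < φ.toFun u := by
  obtain ⟨K, hK, a, ha, hφa, hΔ⟩ := h
  obtain ⟨m, hm⟩ := pow_unbounded_of_one_lt (a / u) one_lt_two
  have hau : a / 2 ^ m ≤ u := (div_le_iff₀ (by positivity)).mpr (by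
    rw [div_lt_iff₀ hu] at hm; linarith)
  have ha_eq : 2 ^ m * (a / 2 ^ m) = a := mul_div_cancel₀ a (by positivity)
  have hφa_le : φ.toFun a ≤ ENNReal.ofReal (K ^ m) * φ.toFun u :=
    calc φ.toFun a = φ.toFun (2 ^ m * (a / 2 ^ m)) := by rw [ha_eq]
      _ ≤ ENNReal.ofReal (K ^ m) * φ.toFun (a / 2 ^ m) :=
        (show Delta2Below φ a K from hΔ).map_two_pow_mul_le hK.le m (by positivity) ha_eq.le
      _ ≤ ENNReal.ofReal (K ^ m) * φ.toFun u := by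
        gcongr; exact φ.monotoneOn (Set.mem_Ici.mpr (by positivity)) hu.le hau
  exact pos_of_ne_zero fun h0 => hφa.ne' (by simpa [h0] using hφa_le)

theorem exists_delta2Below (h : Delta2Zero φ) (hfin : FiniteValued φ) (b : ℝ) :
    ∃ K : ℝ, 0 < K ∧ Delta2Below φ b K := by
  obtain ⟨K, hK, a, ha, hφa, hΔ⟩ := h
  have hφa' : 0 < (φ.toFun a).toReal := ENNReal.toReal_pos hφa.ne' (hfin a)
  set C := (φ.toFun (2 * b)).toReal / (φ.toFun a).toReal
  refine ⟨max K C, lt_max_of_lt_left hK, fun u hu hub => ?_⟩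
  rcases le_total u a with hua | hau
  · exact (hΔ u hu hua).trans (by gcongr; exact le_max_left K C)
  calc φ.toFun (2 * u) ≤ φ.toFun (2 * b) :=
        φ.monotoneOn (Set.mem_Ici.mpr (by linarith)) (Set.mem_Ici.mpr (by linarith)) (by linarith)
    _ = ENNReal.ofReal C * φ.toFun a := by
      rw [← ENNReal.ofReal_toReal (hfin a), ← ENNReal.ofReal_mul (by positivity),
        div_mul_cancel₀ _ hφa'.ne', ENNReal.ofReal_toReal (hfin _)]
    _ ≤ ENNReal.ofReal (max K C) * φ.toFun u := by
      gcongr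
      · exact le_max_right K C
      · exact φ.monotoneOn (Set.mem_Ici.mpr (by linarith)) (Set.mem_Ici.mpr (by linarith)) hau

end Delta2Zero

theorem cesaroMean_nonneg (x : ℕ → ℝ) (n : ℕ) : 0 ≤ cesaroMean x n := by
  unfold cesaroMean
  positivity

theorem cesaroMean_const_mul (c : ℝ) (x : ℕ → ℝ) (n : ℕ) :
    cesaroMean (fun i => c * x i) n = |c| * cesaroMean x n := by
  simp only [cesaroMean, abs_mul, ← Finset.mul_sum, mul_div_assoc]

theorem cesaroMean_add_le (x y : ℕ → ℝ) (n : ℕ) :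
    cesaroMean (fun i => x i + y i) n ≤ cesaroMean x n + cesaroMean y n := by
  rw [cesaroMean, cesaroMean, cesaroMean, ← add_div, ← Finset.sum_add_distrib]
  gcongr with i
  exact abs_add_le _ _

theorem cesaroMean_add_of_nonneg {x y : ℕ → ℝ} (hx : ∀ i, 0 ≤ x i) (hy : ∀ i, 0 ≤ y i)
    (n : ℕ) : cesaroMean (fun i => x i + y i) n = cesaroMean x n + cesaroMean y n := by
  simp only [cesaroMean, abs_of_nonneg (hx _), abs_of_nonneg (hy _),
    abs_of_nonneg (add_nonneg (hx _) (hy _)), Finset.sum_add_distrib, add_div]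

section Modular

variable {φ : OrliczFunction}

theorem map_cesaroMean_le_rho (x : ℕ → ℝ) (n : ℕ) :
    φ.toFun (cesaroMean x n) ≤ rho φ x :=
  ENNReal.le_tsum n

theorem rho_le_rho_of_cesaroMean_le {x y : ℕ → ℝ}
    (h : ∀ n, cesaroMean x n ≤ cesaroMean y n) : rho φ x ≤ rho φ y :=
  ENNReal.tsum_le_tsum fun n => φ.monotoneOn (cesaroMean_nonneg x n) (cesaroMean_nonneg y n) (h n)

theorem rho_const_mul (c : ℝ) (x : ℕ → ℝ) :
    rho φ (fun i => c * x i) = ∑' n, φ.toFun (|c| * cesaroMean x n) := by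
  simp only [rho, cesaroMean_const_mul]

theorem rho_add_rho_le {x y : ℕ → ℝ} (hx : ∀ i, 0 ≤ x i) (hy : ∀ i, 0 ≤ y i) :
    rho φ x + rho φ y ≤ rho φ (fun i => x i + y i) := by
  rw [rho, rho, rho, ← ENNReal.tsum_add]
  refine ENNReal.tsum_le_tsum fun n => ?_
  rw [cesaroMean_add_of_nonneg hx hy]
  exact φ.add_le_map_add (cesaroMean_nonneg x n) (cesaroMean_nonneg y n)

theorem add_mem_cesOrlicz {x y : ℕ → ℝ} (hx : x ∈ cesOrlicz φ) (hy : y ∈ cesOrlicz φ) :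
    (fun i => x i + y i) ∈ cesOrlicz φ := by
  obtain ⟨l₁, hl₁, hρ₁⟩ := hx
  obtain ⟨l₂, hl₂, hρ₂⟩ := hy
  obtain ⟨μ, hμ, hμ₁, hμ₂⟩ : ∃ μ : ℝ, 0 < μ ∧ 2 * μ ≤ l₁ ∧ 2 * μ ≤ l₂ :=
    ⟨min l₁ l₂ / 2, by positivity, by linarith [min_le_left l₁ l₂],
      by linarith [min_le_right l₁ l₂]⟩
  have hterm : ∀ n, φ.toFun (μ * cesaroMean (fun i => x i + y i) n)
      ≤ ENNReal.ofReal (1 / 2) * φ.toFun (l₁ * cesaroMean x n)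
        + ENNReal.ofReal (1 / 2) * φ.toFun (l₂ * cesaroMean y n) := by
    intro n
    have hσx := cesaroMean_nonneg x n
    have hσy := cesaroMean_nonneg y n
    calc φ.toFun (μ * cesaroMean (fun i => x i + y i) n)
        ≤ φ.toFun (μ * cesaroMean x n + μ * cesaroMean y n) :=
          φ.monotoneOn (mul_nonneg hμ.le (cesaroMean_nonneg _ n))
            (Set.mem_Ici.mpr (by positivity))
            (by rw [← mul_add]; exact mul_le_mul_of_nonneg_left (cesaroMean_add_le x y n) hμ.le)
      _ ≤ ENNReal.ofReal (1 / 2) * φ.toFun (2 * (μ * cesaroMean x n))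
          + ENNReal.ofReal (1 / 2) * φ.toFun (2 * (μ * cesaroMean y n)) :=
          φ.map_add_le_half _ _
      _ ≤ _ := by
          gcongr
          · exact φ.monotoneOn (Set.mem_Ici.mpr (by positivity))
              (Set.mem_Ici.mpr (by positivity)) (by nlinarith)
          · exact φ.monotoneOn (Set.mem_Ici.mpr (by positivity))
              (Set.mem_Ici.mpr (by positivity)) (by nlinarith)
  refine ⟨μ, hμ, ?_⟩
  calc rho φ (fun i => μ * (x i + y i))
      ≤ ∑' n, (ENNReal.ofReal (1 / 2) * φ.toFun (l₁ * cesaroMean x n)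
        + ENNReal.ofReal (1 / 2) * φ.toFun (l₂ * cesaroMean y n)) := by
        rw [rho_const_mul, abs_of_pos hμ]
        exact ENNReal.tsum_le_tsum hterm
    _ = ENNReal.ofReal (1 / 2) * rho φ (fun i => l₁ * x i)
        + ENNReal.ofReal (1 / 2) * rho φ (fun i => l₂ * y i) := by
        rw [ENNReal.tsum_add, ENNReal.tsum_mul_left, ENNReal.tsum_mul_left, rho_const_mul,
          rho_const_mul, abs_of_pos hl₁, abs_of_pos hl₂]
    _ < ⊤ := ENNReal.add_lt_top.mpr
        ⟨ENNReal.mul_lt_top ENNReal.ofReal_lt_top hρ₁,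
          ENNReal.mul_lt_top ENNReal.ofReal_lt_top hρ₂⟩

end Modular

theorem OrliczFunction.tendsto_map_div_nhdsGT (φ : OrliczFunction) {u c : ℝ} (hu : 0 ≤ u)
    (hc : 0 < c) :
    Tendsto (fun lam => φ.toFun (u / lam)) (𝓝[>] c) (𝓝 (φ.toFun (u / c))) := by
  rcases hu.eq_or_lt with rfl | hu
  · simp only [zero_div, tendsto_const_nhds]
  refine (φ.leftContinuous' _ (div_pos hu hc)).comp
    (tendsto_nhdsWithin_of_tendsto_nhds_of_eventually_within _ ?_ ?_)
  · exact (tendsto_const_nhds.div tendsto_id hc.ne').mono_left nhdsWithin_le_nhds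
  · filter_upwards [self_mem_nhdsWithin] with lam hlam
    exact div_lt_div_of_pos_left hu hc hlam

theorem cesaroMean_div (x : ℕ → ℝ) (lam : ℝ) (n : ℕ) :
    cesaroMean (fun i => x i / lam) n = cesaroMean x n / |lam| := by
  simp only [div_eq_inv_mul, cesaroMean_const_mul, abs_inv]

def luxSet (φ : OrliczFunction) (x : ℕ → ℝ) : Set ℝ :=
  {lam | 0 < lam ∧ rho φ (fun i => x i / lam) ≤ 1}

section LuxemburgNorm

variable {φ : OrliczFunction} {x : ℕ → ℝ}

theorem luxNorm_eq_sInf_luxSet : luxNorm φ x = sInf (luxSet φ x) := rfl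

theorem bddBelow_luxSet : BddBelow (luxSet φ x) := ⟨0, fun _ h => h.1.le⟩

theorem luxNorm_le_of_mem_luxSet {lam : ℝ} (h : lam ∈ luxSet φ x) : luxNorm φ x ≤ lam :=
  csInf_le bddBelow_luxSet h

theorem luxNorm_le_inv_of_rho_le_one {c : ℝ} (hc : 0 < c) (h : rho φ (fun i => c * x i) ≤ 1) :
    luxNorm φ x ≤ c⁻¹ :=
  luxNorm_le_of_mem_luxSet
    ⟨inv_pos.mpr hc, by simpa only [div_inv_eq_mul, mul_comm (x _)] using h⟩

theorem luxSet_nonempty_of_luxNorm_pos (h : 0 < luxNorm φ x) : (luxSet φ x).Nonempty := by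
  by_contra hne
  rw [Set.not_nonempty_iff_eq_empty] at hne
  simp [luxNorm_eq_sInf_luxSet, hne] at h

theorem rho_div_le_one_of_luxNorm_lt (hne : (luxSet φ x).Nonempty) {lam : ℝ}
    (h : luxNorm φ x < lam) : rho φ (fun i => x i / lam) ≤ 1 := by
  obtain ⟨l, ⟨hl0, hl⟩, hll⟩ := (csInf_lt_iff bddBelow_luxSet hne).mp h
  refine (rho_le_rho_of_cesaroMean_le fun n => ?_).trans hl
  rw [cesaroMean_div, cesaroMean_div, abs_of_pos hl0, abs_of_pos (hl0.trans hll)]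
  exact div_le_div_of_nonneg_left (cesaroMean_nonneg x n) hl0 hll.le

-- Left continuity of `φ` makes the infimum in the Luxemburg norm attained.
theorem rho_div_luxNorm_le_one (h : 0 < luxNorm φ x) :
    rho φ (fun i => x i / luxNorm φ x) ≤ 1 := by
  rw [rho, ENNReal.tsum_eq_iSup_sum]
  refine iSup_le fun s => ?_
  simp only [cesaroMean_div, abs_of_pos h]
  refine le_of_tendsto (tendsto_finsetSum s fun n _ =>
    φ.tendsto_map_div_nhdsGT (cesaroMean_nonneg x n) h) ?_
  filter_upwards [self_mem_nhdsWithin] with lam (hlam : luxNorm φ x < lam)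
  calc ∑ n ∈ s, φ.toFun (cesaroMean x n / lam)
      = ∑ n ∈ s, φ.toFun (cesaroMean (fun i => x i / lam) n) := by
        simp only [cesaroMean_div, abs_of_pos (h.trans hlam)]
    _ ≤ rho φ (fun i => x i / lam) := ENNReal.sum_le_tsum s
    _ ≤ 1 := rho_div_le_one_of_luxNorm_lt (luxSet_nonempty_of_luxNorm_pos h) hlam

theorem luxSet_nonempty_of_mem_cesOrlicz (hx : x ∈ cesOrlicz φ) : (luxSet φ x).Nonempty := by
  obtain ⟨l, hl, hρ⟩ := hx
  set M := (rho φ (fun i => l * x i)).toReal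
  have hM : 0 ≤ M := ENNReal.toReal_nonneg
  set t := (M + 1)⁻¹
  have ht0 : 0 < t := by positivity
  have ht1 : t ≤ 1 := inv_le_one_of_one_le₀ (by linarith)
  refine ⟨(t * l)⁻¹, by positivity, ?_⟩
  calc rho φ (fun i => x i / (t * l)⁻¹)
      = ∑' n, φ.toFun (t * cesaroMean (fun i => l * x i) n) := by
        simp only [div_inv_eq_mul, mul_comm (x _), rho_const_mul, cesaroMean_const_mul,
          abs_of_pos hl, abs_of_pos ht0, mul_assoc]
    _ ≤ ∑' n, ENNReal.ofReal t * φ.toFun (cesaroMean (fun i => l * x i) n) :=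
        ENNReal.tsum_le_tsum fun n => φ.map_mul_le ht0.le ht1 _
    _ = ENNReal.ofReal (t * M) := by
        rw [ENNReal.tsum_mul_left, ← rho, ENNReal.ofReal_mul ht0.le, ENNReal.ofReal_toReal hρ.ne]
    _ ≤ 1 := ENNReal.ofReal_le_one.mpr (by
        rw [inv_mul_le_iff₀ (by positivity)]; linarith)

end LuxemburgNorm

section UniformMonotonicity

variable {φ : OrliczFunction} {b K δ : ℝ}

theorem rho_one_add_mul_le (hb0 : 0 ≤ b) (hb : 1 < φ.toFun b) (hK0 : 0 ≤ K)
    (hK : Delta2Below φ b K) (hδ0 : 0 ≤ δ) (hδ1 : δ ≤ 1) {w : ℕ → ℝ}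
    (hw : rho φ w ≤ 1) :
    rho φ (fun i => (1 + δ) * w i) ≤ ENNReal.ofReal (1 - δ + δ * K) * rho φ w := by
  rw [rho_const_mul, abs_of_nonneg (by linarith), rho, ← ENNReal.tsum_mul_left]
  refine ENNReal.tsum_le_tsum fun n => φ.map_one_add_mul_le hδ0 hδ1 hK0 <|
    hK _ (cesaroMean_nonneg w n) (φ.monotoneOn.reflect_lt (cesaroMean_nonneg w n) hb0 ?_).le
  exact ((map_cesaroMean_le_rho w n).trans hw).trans_lt hb

theorem one_le_rho_of_luxNorm_eq_one (hb0 : 0 ≤ b) (hb : 1 < φ.toFun b) (hK0 : 0 < K)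
    (hK : Delta2Below φ b K) {x : ℕ → ℝ} (h : luxNorm φ x = 1) : 1 ≤ rho φ x := by
  have hle : rho φ x ≤ 1 := by
    have := rho_div_luxNorm_le_one (x := x) (by rw [h]; exact one_pos)
    rw [h] at this
    simpa only [div_one] using this
  by_contra! hlt
  set r := (rho φ x).toReal
  have hr : rho φ x = ENNReal.ofReal r :=
    (ENNReal.ofReal_toReal (hlt.trans ENNReal.one_lt_top).ne).symm
  have hr0 : 0 ≤ r := ENNReal.toReal_nonneg
  have hr1 : r < 1 := ENNReal.ofReal_lt_one.mp (hr ▸ hlt)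
  set δ := min 1 ((1 - r) / K)
  have hδ0 : 0 < δ := lt_min one_pos (div_pos (by linarith) hK0)
  have hδ1 : δ ≤ 1 := min_le_left _ _
  have hδK : δ * K ≤ 1 - r := (le_div_iff₀ hK0).mp (min_le_right _ _)
  have hρ : rho φ (fun i => (1 + δ) * x i) ≤ 1 :=
    calc rho φ (fun i => (1 + δ) * x i) ≤ ENNReal.ofReal (1 - δ + δ * K) * rho φ x :=
          rho_one_add_mul_le hb0 hb hK0.le hK hδ0.le hδ1 hle
      _ = ENNReal.ofReal ((1 - δ + δ * K) * r) := by
          rw [hr, ENNReal.ofReal_mul (by nlinarith)]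
      _ ≤ 1 := ENNReal.ofReal_le_one.mpr (by nlinarith)
  have := luxNorm_le_inv_of_rho_le_one (by positivity) hρ
  rw [h] at this
  exact (inv_lt_one_of_one_lt₀ (by linarith : 1 < 1 + δ)).not_ge this

theorem one_add_le_luxNorm_of_lt_rho (hb0 : 0 ≤ b) (hb : 1 < φ.toFun b) (hK0 : 0 ≤ K)
    (hK : Delta2Below φ b K) (hδ0 : 0 ≤ δ) (hδ1 : δ ≤ 1) {z : ℕ → ℝ}
    (hne : (luxSet φ z).Nonempty) (h : ENNReal.ofReal (1 - δ + δ * K) < rho φ z) :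
    1 + δ ≤ luxNorm φ z := by
  by_contra! hlt
  have hz := rho_div_le_one_of_luxNorm_lt hne hlt
  have := rho_one_add_mul_le hb0 hb hK0 hK hδ0 hδ1 hz
  simp only [mul_div_cancel₀ _ (by linarith : (1 + δ) ≠ 0)] at this
  exact h.not_ge (this.trans (mul_le_of_le_one_right' hz))

theorem Delta2Zero.exists_ofReal_le_rho (h : Delta2Zero φ) {ε : ℝ} (hε : 0 < ε) :
    ∃ η : ℝ, 0 < η ∧
      ∀ y : ℕ → ℝ, ε ≤ luxNorm φ y → ENNReal.ofReal η ≤ rho φ y := by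
  obtain ⟨K, hK, a, ha, -, hΔ⟩ := id h
  obtain ⟨m, hm⟩ := pow_unbounded_of_one_lt ε⁻¹ one_lt_two
  have hm' : ((2 : ℝ) ^ m)⁻¹ < ε := (inv_lt_comm₀ (by positivity) hε).mpr hm
  obtain ⟨r, -, hr0, hra⟩ := ENNReal.lt_iff_exists_real_btwn.mp
    (h.map_pos (by positivity : 0 < a / 2 ^ m))
  refine ⟨min r (K ^ m)⁻¹, lt_min (ENNReal.ofReal_pos.mp hr0) (by positivity),
    fun y hy => ?_⟩
  by_contra! hρ
  -- a small modular keeps every Cesàro mean below `a / 2 ^ m`, where `Δ₂` iterates `m` times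
  have hσ : ∀ n, 2 ^ m * cesaroMean y n ≤ a := fun n => by
    have hlt : φ.toFun (cesaroMean y n) < φ.toFun (a / 2 ^ m) :=
      ((map_cesaroMean_le_rho y n).trans_lt hρ).trans_le
        ((ENNReal.ofReal_le_ofReal (min_le_left _ _)).trans hra.le)
    have := φ.monotoneOn.reflect_lt (cesaroMean_nonneg y n) (Set.mem_Ici.mpr (by positivity)) hlt
    rw [lt_div_iff₀ (by positivity)] at this
    linarith
  have hρ2 : rho φ (fun i => 2 ^ m * y i) ≤ 1 :=
    calc rho φ (fun i => 2 ^ m * y i) = ∑' n, φ.toFun (2 ^ m * cesaroMean y n) := by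
          rw [rho_const_mul, abs_of_pos (by positivity)]
      _ ≤ ∑' n, ENNReal.ofReal (K ^ m) * φ.toFun (cesaroMean y n) :=
          ENNReal.tsum_le_tsum fun n => Delta2Below.map_two_pow_mul_le hΔ hK.le m
            (cesaroMean_nonneg y n) (hσ n)
      _ = ENNReal.ofReal (K ^ m) * rho φ y := ENNReal.tsum_mul_left
      _ ≤ ENNReal.ofReal (K ^ m) * ENNReal.ofReal (K ^ m)⁻¹ := by
          gcongr
          exact hρ.le.trans (ENNReal.ofReal_le_ofReal (min_le_right _ _))
      _ = 1 := by
          rw [← ENNReal.ofReal_mul (by positivity), mul_inv_cancel₀ (by positivity),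
            ENNReal.ofReal_one]
  linarith [luxNorm_le_inv_of_rho_le_one (by positivity) hρ2]

end UniformMonotonicity

theorem stmt_17_general (φ : OrliczFunction) (hfin : FiniteValued φ) (hδ : Delta2Zero φ) :
    ∀ ε : ℝ, 0 < ε → ∃ δ : ℝ, 0 < δ ∧ ∀ x y : ℕ → ℝ,
      x ∈ cesOrlicz φ → y ∈ cesOrlicz φ → (∀ i, 0 ≤ x i) → (∀ i, 0 ≤ y i) →
      luxNorm φ x = 1 → ε ≤ luxNorm φ y → 1 + δ ≤ luxNorm φ (fun i => x i + y i) := by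
  intro ε hε
  obtain ⟨η, hη, hρy⟩ := hδ.exists_ofReal_le_rho hε
  obtain ⟨b, hb0, hb⟩ := φ.exists_one_lt_map
  obtain ⟨K, hK0, hK⟩ := hδ.exists_delta2Below hfin b
  set δ := min 1 (η / K)
  have hδ0 : 0 < δ := lt_min one_pos (div_pos hη hK0)
  have hδK : δ * K ≤ η := (le_div_iff₀ hK0).mp (min_le_right _ _)
  refine ⟨δ, hδ0, fun x y hx hy hx0 hy0 hx1 hyε => ?_⟩
  refine one_add_le_luxNorm_of_lt_rho hb0 hb hK0.le hK hδ0.le (min_le_left _ _)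
    (luxSet_nonempty_of_mem_cesOrlicz (add_mem_cesOrlicz hx hy)) ?_
  calc ENNReal.ofReal (1 - δ + δ * K) < ENNReal.ofReal (1 + η) :=
        (ENNReal.ofReal_lt_ofReal_iff (by linarith)).mpr (by linarith)
    _ = 1 + ENNReal.ofReal η := by rw [ENNReal.ofReal_add zero_le_one hη.le, ENNReal.ofReal_one]
    _ ≤ rho φ x + rho φ y :=
        add_le_add (one_le_rho_of_luxNorm_eq_one hb0 hb hK0 hK hx1) (hρy y hyε)
    _ ≤ rho φ (fun i => x i + y i) := rho_add_rho_le hx0 hy0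

/-- if `φ ∈ Δ₂(0)` then `ces_φ` is uniformly monotone. -/
theorem stmt_17 (φ : OrliczFunction) (hfin : FiniteValued φ) (hδ : Delta2Zero φ)
    (htail : TailFinite φ) :
    ∀ ε : ℝ, 0 < ε → ∃ δ : ℝ, 0 < δ ∧ ∀ x y : ℕ → ℝ,
      x ∈ cesOrlicz φ → y ∈ cesOrlicz φ → (∀ i, 0 ≤ x i) → (∀ i, 0 ≤ y i) →
      luxNorm φ x = 1 → ε ≤ luxNorm φ y → 1 + δ ≤ luxNorm φ (fun i => x i + y i) :=
  stmt_17_general φ hfin hδ
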